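/- arXiv:1511.06756 — 3 statements merged into one kernel-verified Lean document; each statement's English description precedes it below -/
import Mathlib

section
/- Let (X, ρ) be a metric space and {C_n} a sequence of subsets whose superior limit is L. Suppose that for every R > 0 the set (⋃_n C_n) ∩ B_R(x_0) is relatively compact (for some fixed basepoint x_0). Then for each ε > 0 and each R > 0 there exists m such that for all n > m, C_n ∩ B_R(x_0) is contained in the ε-neighborhood V_ε(L) = {p : ∃ x ∈ L, ρ(p,x) < ε} of L. -/
open Filter Set Metric

/-- Topological superior limit of a sequence of sets. -/
def setLimsup {X : Type*} [TopologicalSpace X] (C : ℕ → Set X) : Set X :=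
  {x | ∀ U ∈ nhds x, ∃ᶠ n in atTop, (U ∩ C n).Nonempty}

theorem stmt4 {X : Type*} [MetricSpace X] (C : ℕ → Set X) (L : Set X) (x₀ : X)
    (hL : setLimsup C = L)
    (hcpt : ∀ R > 0, IsCompact (closure ((⋃ n, C n) ∩ Metric.ball x₀ R))) :
    ∀ ε > 0, ∀ R > 0, ∃ m : ℕ, ∀ n > m,
      C n ∩ Metric.ball x₀ R ⊆ {p | ∃ x ∈ L, dist p x < ε} := by
  intro ε hε R hR
  by_contra hcon
  push_neg at hcon
  have hfreq : ∃ᶠ n in atTop, ∃ p ∈ C n ∩ Metric.ball x₀ R, ¬ ∃ x ∈ L, dist p x < ε := by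
    rw [frequently_atTop]
    intro a
    obtain ⟨n, hn, hns⟩ := hcon a
    obtain ⟨p, hp, hpn⟩ := Set.not_subset.1 hns
    exact ⟨n, le_of_lt hn, p, hp, hpn⟩
  obtain ⟨φ, hφ, hP⟩ := Filter.extraction_of_frequently_atTop hfreq
  choose u hu hfar using hP
  have huK : ∀ k, u k ∈ closure ((⋃ n, C n) ∩ Metric.ball x₀ R) := by
    intro k
    exact subset_closure ⟨mem_iUnion.2 ⟨φ k, (hu k).1⟩, (hu k).2⟩
  obtain ⟨x, hxK, ψ, hψ, htend⟩ := (hcpt R hR).tendsto_subseq huK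
  have hxL : x ∈ L := by
    rw [← hL]
    intro U hU
    rw [frequently_atTop]
    intro a
    have h1 : ∀ᶠ k in atTop, u (ψ k) ∈ U := htend.eventually (eventually_mem_nhds_iff.mpr hU |>.mono fun y hy => mem_of_mem_nhds hy)
    obtain ⟨k, hkU, hka⟩ := (h1.and (eventually_ge_atTop a)).exists
    refine ⟨φ (ψ k), le_trans hka ((hφ.comp hψ).id_le k), u (ψ k), hkU, (hu (ψ k)).1⟩
  have : ∀ᶠ k in atTop, dist (u (ψ k)) x < ε := by
    have := htend (Metric.ball_mem_nhds x hε)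
    simpa [Metric.mem_ball] using this
  obtain ⟨k, hk⟩ := this.exists
  exact hfar (ψ k) ⟨x, hxL, hk⟩
end

section
/- Let X be a metric space, {C_n} a sequence of subsets of X, and suppose z* ∈ liminf C_n. If each C_n is connected and unbounded, and z* has finite distance to a fixed basepoint, then for every δ > 0 such that the δ-neighborhood U_δ of D := limsup C_n satisfies ∂U_δ ∩ D = ∅ and D is compact, there exists N such that for all n > N, C_n ∩ ∂U_δ ≠ ∅. -/
open Filter Set Metric

/-- Topological inferior limit of a sequence of sets. -/
def setLiminf {X : Type*} [TopologicalSpace X] (C : ℕ → Set X) : Set X :=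
  {x | ∀ U ∈ nhds x, ∀ᶠ n in atTop, (U ∩ C n).Nonempty}

lemma preconn_frontier {X : Type*} [TopologicalSpace X] {s t : Set X}
    (hs : IsPreconnected s) (h1 : (s ∩ t).Nonempty) (h2 : (s \ t).Nonempty) :
    (s ∩ frontier t).Nonempty := by
  by_contra h
  rw [not_nonempty_iff_eq_empty] at h
  have hsub : s ⊆ interior t ∪ (closure t)ᶜ := by
    intro x hx
    have hxf : x ∉ frontier t := fun hf => (h ▸ (⟨hx, hf⟩ : x ∈ s ∩ frontier t) : x ∈ (∅ : Set X))
    by_cases hc : x ∈ closure t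
    · left; by_contra hi; exact hxf ⟨hc, hi⟩
    · right; exact hc
  obtain ⟨x, hxs, hxt⟩ := h1
  have hx1 : x ∈ s ∩ interior t := by
    refine ⟨hxs, ?_⟩
    rcases hsub hxs with h' | h'
    · exact h'
    · exact absurd (subset_closure hxt) h'
  obtain ⟨y, hys, hyt⟩ := h2
  have hy1 : y ∈ s ∩ (closure t)ᶜ := by
    refine ⟨hys, ?_⟩
    rcases hsub hys with h' | h'
    · exact absurd (interior_subset h') hyt
    · exact h'
  obtain ⟨w, hw⟩ := hs (interior t) (closure t)ᶜ isOpen_interior isClosed_closure.isOpen_compl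
    hsub ⟨x, hx1⟩ ⟨y, hy1⟩
  exact hw.2.2 (subset_closure (interior_subset hw.2.1))

theorem stmt14 {X : Type*} [MetricSpace X] (C : ℕ → Set X)
    (hconn : ∀ n, IsConnected (C n)) (hunb : ∀ n, ¬ Bornology.IsBounded (C n))
    (z : X) (hz : z ∈ setLiminf C)
    (D : Set X) (hD : D = setLimsup C) (hDcpt : IsCompact D)
    (δ : ℝ) (hδ : 0 < δ)
    (U : Set X) (hU : U = {p : X | ∃ x ∈ D, dist p x < δ})
    (hfr : frontier U ∩ D = ∅) :
    ∃ N : ℕ, ∀ n > N, (C n ∩ frontier U).Nonempty := by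
  -- z ∈ D
  have hzD : z ∈ D := by
    rw [hD]
    intro V hV
    exact (hz V hV).frequently
  -- ball z δ ⊆ U
  have hball : Metric.ball z δ ⊆ U := by
    intro p hp
    rw [hU]
    exact ⟨z, hzD, hp⟩
  -- U is bounded
  have hUb : Bornology.IsBounded U := by
    obtain ⟨R, hR⟩ := (hDcpt.isBounded.subset_closedBall z)
    apply Bornology.IsBounded.subset (Metric.isBounded_closedBall (x := z) (r := R + δ))
    intro p hp
    rw [hU] at hp
    obtain ⟨x, hxD, hpx⟩ := hp
    have := hR hxD
    rw [Metric.mem_closedBall] at *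
    calc dist p z ≤ dist p x + dist x z := dist_triangle p x z
    _ ≤ δ + R := add_le_add hpx.le this
    _ = R + δ := by ring
  -- eventually C n meets ball z δ
  have hev := hz (Metric.ball z δ) (Metric.ball_mem_nhds z hδ)
  rw [eventually_atTop] at hev
  obtain ⟨N, hN⟩ := hev
  refine ⟨N, fun n hn => ?_⟩
  obtain ⟨p, hpb, hpC⟩ := hN n hn.le
  have h1 : (C n ∩ U).Nonempty := ⟨p, hpC, hball hpb⟩
  have h2 : (C n \ U).Nonempty := by
    rw [diff_nonempty]
    intro hsub
    exact hunb n (hUb.subset hsub)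
  exact preconn_frontier (hconn n).isPreconnected h1 h2
end

section
/- Let E be a real Banach space, L : E → E a compact (completely continuous) positively homogeneous map, and H : ℝ × E → E completely continuous with H(λ,u) = o(‖u‖) at u = 0 uniformly on bounded λ-intervals. Fix λ ∈ ℝ. If for every ρ₀ > 0 there exist s_n ∈ [0,1] and u_n ∈ E with 0 < ‖u_n‖ ≤ ρ₀, ‖u_n‖ → 0, and u_n = L(u_n) + s_n H(λ, u_n), then there exists v₀ ∈ E with ‖v₀‖ = 1 and v₀ = L(v₀). -/
open Filter Set

theorem stmt17 {E : Type*} [NormedAddCommGroup E] [NormedSpace ℝ E] [CompleteSpace E]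
    (L : E → E) (hLcont : Continuous L)
    (hLcomp : ∀ s : Set E, Bornology.IsBounded s → IsCompact (closure (L '' s)))
    (hLhom : ∀ t : ℝ, 0 < t → ∀ u : E, L (t • u) = t • L u)
    (H : ℝ → E → E) (hHcont : Continuous (fun q : ℝ × E => H q.1 q.2))
    (hHcomp : ∀ s : Set (ℝ × E), Bornology.IsBounded s →
      IsCompact (closure ((fun q : ℝ × E => H q.1 q.2) '' s)))
    (hHo : ∀ M > (0:ℝ), ∀ ε > (0:ℝ), ∃ δ > (0:ℝ), ∀ lam : ℝ, |lam| ≤ M →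
      ∀ u : E, 0 < ‖u‖ → ‖u‖ ≤ δ → ‖H lam u‖ ≤ ε * ‖u‖)
    (lam : ℝ) (s : ℕ → ℝ) (u : ℕ → E)
    (hs : ∀ n, s n ∈ Icc (0:ℝ) 1) (hu0 : ∀ n, u n ≠ 0)
    (hun : Tendsto (fun n => ‖u n‖) atTop (nhds 0))
    (heq : ∀ n, u n = L (u n) + s n • H lam (u n)) :
    ∃ v : E, ‖v‖ = 1 ∧ v = L v := by
  -- normalized sequence
  set v : ℕ → E := fun n => ‖u n‖⁻¹ • u n with hv
  have hupos : ∀ n, (0:ℝ) < ‖u n‖ := fun n => norm_pos_iff.mpr (hu0 n)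
  have hipos : ∀ n, (0:ℝ) < ‖u n‖⁻¹ := fun n => inv_pos.mpr (hupos n)
  have hnorm : ∀ n, ‖v n‖ = 1 := by
    intro n
    simp only [hv, norm_smul, norm_inv, norm_norm]
    exact inv_mul_cancel₀ (hupos n).ne'
  -- the remainder term
  have hveq : ∀ n, v n = L (v n) + (s n * ‖u n‖⁻¹) • H lam (u n) := by
    intro n
    have hL : L (v n) = ‖u n‖⁻¹ • L (u n) := hLhom _ (hipos n) _
    have h2 := congrArg (fun x => ‖u n‖⁻¹ • x) (heq n)
    simp only [smul_add, smul_smul] at h2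
    rw [hL]
    show ‖u n‖⁻¹ • u n = ‖u n‖⁻¹ • L (u n) + (s n * ‖u n‖⁻¹) • H lam (u n)
    rw [h2, mul_comm (‖u n‖⁻¹) (s n)]
  have hr : Tendsto (fun n => v n - L (v n)) atTop (nhds 0) := by
    rw [tendsto_zero_iff_norm_tendsto_zero]
    rw [Metric.tendsto_atTop]
    intro ε hε
    obtain ⟨δ, hδ, hδ'⟩ := hHo (|lam| + 1) (by positivity) (ε / 2) (by positivity)
    obtain ⟨N, hN⟩ := Metric.tendsto_atTop.mp hun δ hδ
    refine ⟨N, fun n hn => ?_⟩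
    have hund : ‖u n‖ ≤ δ := by
      have := hN n hn
      rw [Real.dist_eq, sub_zero, abs_of_nonneg (norm_nonneg _)] at this
      exact this.le
    have hH := hδ' lam (by linarith [abs_nonneg lam]) (u n) (hupos n) hund
    have h1 : ‖v n - L (v n)‖ = ‖(s n * ‖u n‖⁻¹) • H lam (u n)‖ := by
      congr 1
      rw [sub_eq_iff_eq_add, add_comm]
      exact hveq n
    have hs0 := (hs n).1
    have hs1 := (hs n).2
    have h2 : ‖(s n * ‖u n‖⁻¹) • H lam (u n)‖ ≤ ‖u n‖⁻¹ * ‖H lam (u n)‖ := by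
      rw [norm_smul, Real.norm_eq_abs, abs_of_nonneg (by positivity)]
      have : s n * ‖u n‖⁻¹ ≤ 1 * ‖u n‖⁻¹ :=
        mul_le_mul_of_nonneg_right hs1 (hipos n).le
      nlinarith [norm_nonneg (H lam (u n))]
    have h3 : ‖u n‖⁻¹ * ‖H lam (u n)‖ ≤ ε / 2 := by
      calc ‖u n‖⁻¹ * ‖H lam (u n)‖ ≤ ‖u n‖⁻¹ * (ε / 2 * ‖u n‖) :=
            mul_le_mul_of_nonneg_left hH (hipos n).le
        _ = ε / 2 := by
            rw [mul_comm (ε / 2) ‖u n‖, ← mul_assoc, inv_mul_cancel₀ (hupos n).ne', one_mul]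
    rw [Real.dist_eq, sub_zero, abs_of_nonneg (norm_nonneg _), h1]
    linarith
  -- compactness
  have hK : IsCompact (closure (L '' Metric.sphere (0:E) 1)) :=
    hLcomp _ (Metric.isBounded_sphere)
  have hmem : ∀ n, L (v n) ∈ closure (L '' Metric.sphere (0:E) 1) := by
    intro n
    exact subset_closure ⟨v n, by simpa using hnorm n, rfl⟩
  obtain ⟨w, -, φ, hφ, hwlim⟩ := hK.tendsto_subseq hmem
  have hvlim : Tendsto (fun k => v (φ k)) atTop (nhds w) := by
    have : Tendsto (fun k => L (v (φ k)) + (v (φ k) - L (v (φ k)))) atTop (nhds (w + 0)) :=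
      hwlim.add (hr.comp hφ.tendsto_atTop)
    simpa using this
  refine ⟨w, ?_, ?_⟩
  · have h1 : Tendsto (fun k => ‖v (φ k)‖) atTop (nhds ‖w‖) := hvlim.norm
    have h2 : Tendsto (fun k => ‖v (φ k)‖) atTop (nhds 1) := by
      simp only [hnorm]; exact tendsto_const_nhds
    exact tendsto_nhds_unique h1 h2
  · have hLlim : Tendsto (fun k => L (v (φ k))) atTop (nhds (L w)) :=
      (hLcont.tendsto w).comp hvlim
    exact tendsto_nhds_unique hwlim hLlim
end
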